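/- Let t, n ∈ ℝ² be orthonormal vectors. Let η > 0, ξ ≥ 0, η̃ > 0, ξ̃ > 0 be real, and let the incident plane wave uⁱ(x) = aⁱ·exp(i·(D_i·⟪dⁱ,x⟫ + i·E_i·⟪eⁱ,x⟫)) have aⁱ ≠ 0, unit vectors dⁱ, eⁱ, constants D_i > 0, E_i ≥ 0 satisfying D_i² − E_i² = η² − ξ² and D_i·E_i·⟪dⁱ,eⁱ⟫ = η·ξ. Set Ñ := D_i·⟪dⁱ,t⟫, Ẽ := E_i·⟪eⁱ,t⟫, D_t := sqrt((η̃² − ξ̃² + Ñ² + Ẽ² + sqrt((η̃² − ξ̃² − Ñ² + Ẽ²)² + 4(ÑẼ − η̃ξ̃)²))/2), E_t := sqrt(D_t² + ξ̃² − η̃²), and let dᵗ, eᵗ ∈ ℝ² be any unit vectors with D_t·⟪dᵗ,t⟫ = Ñ, E_t·⟪eᵗ,t⟫ = Ẽ, and D_t·E_t·⟪dᵗ,eᵗ⟫ = η̃·ξ̃. Define dʳ := dⁱ − 2⟪dⁱ,n⟫·n, eʳ := eⁱ − 2⟪eⁱ,n⟫·n, γ_i := D_i·⟪dⁱ,n⟫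 + i·E_i·⟪eⁱ,n⟫, γ_t := D_t·⟪dᵗ,n⟫ + i·E_t·⟪eᵗ,n⟫; let α ∈ ℂ with γ_i + α·γ_t ≠ 0, and set aʳ := aⁱ·(γ_i − α·γ_t)/(γ_i + α·γ_t), aᵗ := 2·aⁱ·γ_i/(γ_i + α·γ_t). Define uʳ(x) = aʳ·exp(i·(D_i·⟪dʳ,x⟫ + i·E_i·⟪eʳ,x⟫)) and uᵗ(x) = aᵗ·exp(i·(D_t·⟪dᵗ,x⟫ + i·E_t·⟪eᵗ,x⟫)). Then: (i) uⁱ and uʳ satisfy Δu + (η + iξ)²·u = 0 on all of ℝ²; (ii) uᵗ satisfies Δu + (η̃ + iξ̃)²·u = 0 on all of ℝ²; (iii) for every x ∈ ℝ² with ⟪x,n⟫ = 0, uⁱ(x) + uʳ(x) = uᵗ(x) and the directional derivatives in the direction n satisfy ∂ₙuⁱ(x) + ∂ₙuʳ(x) = α·∂ₙuᵗ(x). -/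

import Mathlib

noncomputable section

open Complex

/-- The Euclidean plane ℝ². -/
abbrev V : Type := EuclideanSpace ℝ (Fin 2)

/-- A (possibly inhomogeneous) plane wave with amplitude `a`, propagation direction `d`,
decay direction `e`, and propagation/decay constants `D`, `E`:
`u(x) = a·exp(i·(D·⟪d,x⟫ + i·E·⟪e,x⟫))`. -/
noncomputable def planeWave (a : ℂ) (d e : V) (D E : ℝ) (x : V) : ℂ :=
  a * Complex.exp (Complex.I *
    ((D : ℂ) * ((inner ℝ d x : ℝ) : ℂ) + Complex.I * ((E : ℂ) * ((inner ℝ e x : ℝ) : ℂ))))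

/-- The Laplacian on ℝ² of a complex-valued function. -/
noncomputable def laplacian (u : V → ℂ) (x : V) : ℂ :=
  ∑ i : Fin 2, iteratedFDeriv ℝ 2 u x ![EuclideanSpace.single i (1 : ℝ),
    EuclideanSpace.single i (1 : ℝ)]

/-- Directional derivative of `u` at `x` in the direction `n`. -/
noncomputable def dirDeriv (u : V → ℂ) (n x : V) : ℂ := fderiv ℝ u x n

/-! A plane wave is `a * exp (L x)` for the complex linear form `L = i (D⟪d, ·⟫ + i E⟪e, ·⟫)`,
so its Laplacian is `u * ∑ L(bᵢ)²` over an orthonormal basis, and the dispersion relations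
`D² - E² = η² - ξ²`, `D E ⟪d, e⟫ = η ξ` turn this sum into `-(η + i ξ)²`. The reflection in the
interface is an isometry, so the reflected wave inherits these relations; the choice of `D_t`
forces `D_t² ≥ η̃² - ξ̃²`, whence `E_t² = D_t² + ξ̃² - η̃²`.
On the interface `x = ⟪t, x⟫ t`, so each phase there is `⟪t, x⟫ L(t)`. Snell's law and the
reflection make the three tangential phases `L(t)` agree, while `L(n)` is `i γ_i`, `-i γ_i` and
`i γ_t`; the transmission conditions thus reduce to the Fresnel identities `aⁱ + aʳ = aᵗ` and
`(aⁱ - aʳ) γ_i = α aᵗ γ_t`. -/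

section InnerProductSpace

variable {F : Type*} [NormedAddCommGroup F] [InnerProductSpace ℝ F]

def phase (d e : F) (D E : ℝ) : F →L[ℝ] ℂ :=
  I • ((D : ℂ) • ofRealCLM.comp (innerSL ℝ d) + (I * E) • ofRealCLM.comp (innerSL ℝ e))

theorem phase_apply (d e : F) (D E : ℝ) (x : F) :
    phase d e D E x = I * (D * (inner ℝ d x : ℝ) + I * (E * (inner ℝ e x : ℝ))) := by
  simp [phase, mul_add, mul_assoc]

theorem hasFDerivAt_const_mul_cexp (a : ℂ) (L : F →L[ℝ] ℂ) (x : F) :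
    HasFDerivAt (fun y => a * cexp (L y)) ((a * cexp (L x)) • L) x := by
  simpa [smul_smul] using (L.hasFDerivAt.cexp).const_mul a

theorem iteratedFDeriv_two_const_mul_cexp (a : ℂ) (L : F →L[ℝ] ℂ) (x m v : F) :
    iteratedFDeriv ℝ 2 (fun y => a * cexp (L y)) x ![m, v] = a * cexp (L x) * L m * L v := by
  have hfd : fderiv ℝ (fun y => a * cexp (L y)) = fun y => (a * cexp (L y)) • L :=
    funext fun y => (hasFDerivAt_const_mul_cexp a L y).fderiv
  rw [iteratedFDeriv_two_apply, hfd, ((hasFDerivAt_const_mul_cexp a L x).smul_const L).fderiv]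
  simp [mul_assoc]

theorem sum_sq_phase {ι : Type*} [Fintype ι] (b : OrthonormalBasis ι ℝ F) (d e : F) (D E : ℝ) :
    ∑ i, phase d e D E (b i) ^ 2
      = -(D ^ 2 * (inner ℝ d d : ℝ) + 2 * I * D * E * (inner ℝ d e : ℝ)
          - E ^ 2 * (inner ℝ e e : ℝ)) := by
  have hsum : ∀ x y : F, ∑ i, ((inner ℝ x (b i) : ℝ) : ℂ) * (inner ℝ y (b i) : ℝ)
      = (inner ℝ x y : ℝ) := fun x y => by
    rw [← b.sum_inner_mul_inner x y]; push_cast; simp [real_inner_comm]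
  rw [← hsum d d, ← hsum d e, ← hsum e e]
  simp only [Finset.mul_sum, ← Finset.sum_sub_distrib, ← Finset.sum_add_distrib,
    ← Finset.sum_neg_distrib]
  refine Finset.sum_congr rfl fun i _ => ?_
  rw [phase_apply]
  set p : ℂ := ((inner ℝ d (b i) : ℝ) : ℂ)
  set q : ℂ := ((inner ℝ e (b i) : ℝ) : ℂ)
  linear_combination (D ^ 2 * p ^ 2 + 2 * I * D * E * p * q + (I ^ 2 - 1) * E ^ 2 * q ^ 2) * I_sq

theorem reflection_orthogonalComplement_singleton_apply {n : F} (hn : ‖n‖ = 1) (v : F) :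
    (ℝ ∙ n)ᗮ.reflection v = v - (2 * (inner ℝ v n : ℝ)) • n := by
  rw [Submodule.reflection_orthogonal_apply, Submodule.reflection_singleton_apply, hn,
    real_inner_comm]
  simp [mul_smul, two_smul]

theorem inner_reflection_left (K : Submodule ℝ F) [K.HasOrthogonalProjection] (v x : F) :
    (inner ℝ (K.reflection v) x : ℝ) = inner ℝ v (K.reflection x) := by
  conv_lhs => rw [← K.reflection_reflection x]
  exact K.reflection.inner_map_map v _

theorem phase_reflection (K : Submodule ℝ F) [K.HasOrthogonalProjection] (d e : F) (D E : ℝ)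
    (x : F) : phase (K.reflection d) (K.reflection e) D E x = phase d e D E (K.reflection x) := by
  simp only [phase_apply, inner_reflection_left]

theorem orthonormal_pair {t n : F} (ht : ‖t‖ = 1) (hn : ‖n‖ = 1) (htn : (inner ℝ t n : ℝ) = 0) :
    Orthonormal ℝ ![t, n] := by
  refine ⟨by simp [Fin.forall_fin_two, ht, hn], fun i j hij => ?_⟩
  fin_cases i <;> fin_cases j <;> simp_all [real_inner_comm]

theorem eq_inner_smul_of_inner_eq_zero [FiniteDimensional ℝ F] (hF : Module.finrank ℝ F = 2)
    {t n x : F} (hon : Orthonormal ℝ ![t, n]) (hx : (inner ℝ x n : ℝ) = 0) :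
    x = (inner ℝ t x : ℝ) • t := by
  let b := (basisOfOrthonormalOfCardEqFinrank hon (by simp [hF])).toOrthonormalBasis
    (by rwa [coe_basisOfOrthonormalOfCardEqFinrank])
  have hb : ⇑b = ![t, n] := by
    rw [Module.Basis.coe_toOrthonormalBasis, coe_basisOfOrthonormalOfCardEqFinrank]
  have := b.sum_repr' x
  rw [Fin.sum_univ_two, hb] at this
  rw [real_inner_comm] at hx
  simpa [hx] using this.symm

end InnerProductSpace

theorem le_sq_sqrt_half_add_sqrt (A p q c : ℝ) (hc : 0 ≤ c) :
    A ≤ √((A + p ^ 2 + q ^ 2 + √((A - p ^ 2 + q ^ 2) ^ 2 + c)) / 2) ^ 2 := by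
  have h : A - p ^ 2 + q ^ 2 ≤ √((A - p ^ 2 + q ^ 2) ^ 2 + c) :=
    Real.le_sqrt_of_sq_le (by linarith)
  rw [Real.sq_sqrt']
  linarith [le_max_left ((A + p ^ 2 + q ^ 2 + √((A - p ^ 2 + q ^ 2) ^ 2 + c)) / 2) 0, sq_nonneg q]

theorem fresnel_amplitudes {aI aR aT γi γt α : ℂ} (hden : γi + α * γt ≠ 0)
    (haR : aR = aI * (γi - α * γt) / (γi + α * γt)) (haT : aT = 2 * aI * γi / (γi + α * γt)) :
    aI + aR = aT ∧ (aI - aR) * γi = α * aT * γt := by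
  subst haR haT
  constructor <;> field_simp <;> ring

theorem planeWave_eq_cexp (a : ℂ) (d e : V) (D E : ℝ) :
    planeWave a d e D E = fun x => a * cexp (phase d e D E x) := by
  funext x; rw [planeWave, phase_apply]

theorem dirDeriv_planeWave (a : ℂ) (d e : V) (D E : ℝ) (n x : V) :
    dirDeriv (planeWave a d e D E) n x = planeWave a d e D E x * phase d e D E n := by
  rw [dirDeriv, planeWave_eq_cexp, (hasFDerivAt_const_mul_cexp _ _ x).fderiv]
  simp

theorem laplacian_planeWave (a : ℂ) (d e : V) (D E : ℝ) (x : V) :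
    laplacian (planeWave a d e D E) x
      = planeWave a d e D E x * ∑ i, phase d e D E (EuclideanSpace.basisFun (Fin 2) ℝ i) ^ 2 := by
  simp only [laplacian, planeWave_eq_cexp, iteratedFDeriv_two_const_mul_cexp, Finset.mul_sum,
    EuclideanSpace.basisFun_apply]
  exact Finset.sum_congr rfl fun i _ => by ring

theorem helmholtz_planeWave (a : ℂ) {d e : V} (hd : ‖d‖ = 1) (he : ‖e‖ = 1) {D E η ξ : ℝ}
    (h₁ : D ^ 2 - E ^ 2 = η ^ 2 - ξ ^ 2) (h₂ : D * E * (inner ℝ d e : ℝ) = η * ξ) (x : V) :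
    laplacian (planeWave a d e D E) x + (η + I * ξ) ^ 2 * planeWave a d e D E x = 0 := by
  have h₁' : (D : ℂ) ^ 2 - E ^ 2 = η ^ 2 - ξ ^ 2 := by exact_mod_cast h₁
  have h₂' : (D : ℂ) * E * (inner ℝ d e : ℝ) = η * ξ := by exact_mod_cast h₂
  rw [laplacian_planeWave, sum_sq_phase, real_inner_self_eq_norm_sq, real_inner_self_eq_norm_sq,
    hd, he]
  push_cast
  linear_combination planeWave a d e D E x * (-h₁' - 2 * I * h₂' + ξ ^ 2 * I_sq)

theorem planeWave_of_inner_eq_zero {t n x : V} (hon : Orthonormal ℝ ![t, n])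
    (hx : (inner ℝ x n : ℝ) = 0) (a : ℂ) (d e : V) (D E : ℝ) :
    planeWave a d e D E x = a * cexp ((inner ℝ t x : ℝ) * phase d e D E t) := by
  rw [planeWave_eq_cexp]
  conv_lhs => rw [eq_inner_smul_of_inner_eq_zero finrank_euclideanSpace_fin hon hx]
  simp

theorem GO_construction_solves_interface_problem_general
    (t n : V) (ht : ‖t‖ = 1) (hn : ‖n‖ = 1) (htn : (inner ℝ t n : ℝ) = 0)
    (η ξ ηt ξt : ℝ)
    (aI : ℂ) (di ei : V) (hdi : ‖di‖ = 1) (hei : ‖ei‖ = 1)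
    (Di Ei : ℝ)
    (hHelmI1 : Di ^ 2 - Ei ^ 2 = η ^ 2 - ξ ^ 2)
    (hHelmI2 : Di * Ei * (inner ℝ di ei : ℝ) = η * ξ)
    (Nt : ℝ) (hNt : Nt = Di * (inner ℝ di t : ℝ))
    (Et' : ℝ) (hEt' : Et' = Ei * (inner ℝ ei t : ℝ))
    (Dt : ℝ)
    (hDt : Dt = Real.sqrt ((ηt ^ 2 - ξt ^ 2 + Nt ^ 2 + Et' ^ 2
      + Real.sqrt ((ηt ^ 2 - ξt ^ 2 - Nt ^ 2 + Et' ^ 2) ^ 2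
        + 4 * (Nt * Et' - ηt * ξt) ^ 2)) / 2))
    (Et : ℝ) (hEt : Et = Real.sqrt (Dt ^ 2 + ξt ^ 2 - ηt ^ 2))
    (dt et : V) (hdt : ‖dt‖ = 1) (het : ‖et‖ = 1)
    (hSnellD : Dt * (inner ℝ dt t : ℝ) = Nt)
    (hSnellE : Et * (inner ℝ et t : ℝ) = Et')
    (hHelmT : Dt * Et * (inner ℝ dt et : ℝ) = ηt * ξt)
    (dr : V) (hdr : dr = di - (2 * (inner ℝ di n : ℝ)) • n)
    (er : V) (her : er = ei - (2 * (inner ℝ ei n : ℝ)) • n)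
    (γi γt : ℂ)
    (hγi : γi = (Di : ℂ) * ((inner ℝ di n : ℝ) : ℂ) + Complex.I * ((Ei : ℂ) * ((inner ℝ ei n : ℝ) : ℂ)))
    (hγt : γt = (Dt : ℂ) * ((inner ℝ dt n : ℝ) : ℂ) + Complex.I * ((Et : ℂ) * ((inner ℝ et n : ℝ) : ℂ)))
    (α : ℂ) (hden : γi + α * γt ≠ 0)
    (aR : ℂ) (haR : aR = aI * (γi - α * γt) / (γi + α * γt))
    (aT : ℂ) (haT : aT = 2 * aI * γi / (γi + α * γt)) :
    (∀ x : V, laplacian (planeWave aI di ei Di Ei) x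
        + ((η : ℂ) + Complex.I * (ξ : ℂ)) ^ 2 * planeWave aI di ei Di Ei x = 0)
      ∧ (∀ x : V, laplacian (planeWave aR dr er Di Ei) x
          + ((η : ℂ) + Complex.I * (ξ : ℂ)) ^ 2 * planeWave aR dr er Di Ei x = 0)
      ∧ (∀ x : V, laplacian (planeWave aT dt et Dt Et) x
          + ((ηt : ℂ) + Complex.I * (ξt : ℂ)) ^ 2 * planeWave aT dt et Dt Et x = 0)
      ∧ (∀ x : V, (inner ℝ x n : ℝ) = 0 →
          planeWave aI di ei Di Ei x + planeWave aR dr er Di Ei x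
              = planeWave aT dt et Dt Et x
            ∧ dirDeriv (planeWave aI di ei Di Ei) n x
                + dirDeriv (planeWave aR dr er Di Ei) n x
              = α * dirDeriv (planeWave aT dt et Dt Et) n x) := by
  rw [← reflection_orthogonalComplement_singleton_apply hn] at hdr her
  subst hdr her
  have hHelmT1 : Dt ^ 2 - Et ^ 2 = ηt ^ 2 - ξt ^ 2 := by
    have := le_sq_sqrt_half_add_sqrt (ηt ^ 2 - ξt ^ 2) Nt Et' (4 * (Nt * Et' - ηt * ξt) ^ 2)
      (by positivity)
    rw [← hDt] at this
    rw [hEt, Real.sq_sqrt (by linarith)]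
    ring
  refine ⟨helmholtz_planeWave aI hdi hei hHelmI1 hHelmI2,
    helmholtz_planeWave aR (by simpa) (by simpa) hHelmI1 (by simpa using hHelmI2),
    helmholtz_planeWave aT hdt het hHelmT1 hHelmT, fun x hx => ?_⟩
  have hRn : (ℝ ∙ n)ᗮ.reflection n = -n :=
    Submodule.reflection_orthogonalComplement_singleton_eq_neg n
  have hRt : (ℝ ∙ n)ᗮ.reflection t = t := Submodule.reflection_mem_subspace_eq_self
    ((Submodule.mem_orthogonal_singleton_iff_inner_left).2 htn)
  have hSnell : phase dt et Dt Et t = phase di ei Di Ei t := by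
    simp only [phase_apply, ← ofReal_mul, hSnellD, hSnellE, hNt, hEt']
  have hγ : phase di ei Di Ei n = I * γi := by rw [phase_apply, hγi]
  have hγ' : phase dt et Dt Et n = I * γt := by rw [phase_apply, hγt]
  obtain ⟨hsum, hjump⟩ := fresnel_amplitudes hden haR haT
  simp only [dirDeriv_planeWave, planeWave_of_inner_eq_zero (orthonormal_pair ht hn htn) hx,
    phase_reflection, hRt, hRn, map_neg, hSnell, hγ, hγ']
  constructor
  · linear_combination cexp ((inner ℝ t x : ℝ) * phase di ei Di Ei t) * hsum
  · linear_combination (cexp ((inner ℝ t x : ℝ) * phase di ei Di Ei t) * I) * hjump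

theorem GO_construction_solves_interface_problem
    (t n : V) (ht : ‖t‖ = 1) (hn : ‖n‖ = 1) (htn : (inner ℝ t n : ℝ) = 0)
    (η ξ ηt ξt : ℝ) (hη : 0 < η) (hξ : 0 ≤ ξ) (hηt : 0 < ηt) (hξt : 0 < ξt)
    (aI : ℂ) (haI : aI ≠ 0) (di ei : V) (hdi : ‖di‖ = 1) (hei : ‖ei‖ = 1)
    (Di Ei : ℝ) (hDi : 0 < Di) (hEi : 0 ≤ Ei)
    (hHelmI1 : Di ^ 2 - Ei ^ 2 = η ^ 2 - ξ ^ 2)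
    (hHelmI2 : Di * Ei * (inner ℝ di ei : ℝ) = η * ξ)
    (Nt : ℝ) (hNt : Nt = Di * (inner ℝ di t : ℝ))
    (Et' : ℝ) (hEt' : Et' = Ei * (inner ℝ ei t : ℝ))
    (Dt : ℝ)
    (hDt : Dt = Real.sqrt ((ηt ^ 2 - ξt ^ 2 + Nt ^ 2 + Et' ^ 2
      + Real.sqrt ((ηt ^ 2 - ξt ^ 2 - Nt ^ 2 + Et' ^ 2) ^ 2
        + 4 * (Nt * Et' - ηt * ξt) ^ 2)) / 2))
    (Et : ℝ) (hEt : Et = Real.sqrt (Dt ^ 2 + ξt ^ 2 - ηt ^ 2))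
    (dt et : V) (hdt : ‖dt‖ = 1) (het : ‖et‖ = 1)
    (hSnellD : Dt * (inner ℝ dt t : ℝ) = Nt)
    (hSnellE : Et * (inner ℝ et t : ℝ) = Et')
    (hHelmT : Dt * Et * (inner ℝ dt et : ℝ) = ηt * ξt)
    (dr : V) (hdr : dr = di - (2 * (inner ℝ di n : ℝ)) • n)
    (er : V) (her : er = ei - (2 * (inner ℝ ei n : ℝ)) • n)
    (γi γt : ℂ)
    (hγi : γi = (Di : ℂ) * ((inner ℝ di n : ℝ) : ℂ) + Complex.I * ((Ei : ℂ) * ((inner ℝ ei n : ℝ) : ℂ)))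
    (hγt : γt = (Dt : ℂ) * ((inner ℝ dt n : ℝ) : ℂ) + Complex.I * ((Et : ℂ) * ((inner ℝ et n : ℝ) : ℂ)))
    (α : ℂ) (hden : γi + α * γt ≠ 0)
    (aR : ℂ) (haR : aR = aI * (γi - α * γt) / (γi + α * γt))
    (aT : ℂ) (haT : aT = 2 * aI * γi / (γi + α * γt)) :
    (∀ x : V, laplacian (planeWave aI di ei Di Ei) x
        + ((η : ℂ) + Complex.I * (ξ : ℂ)) ^ 2 * planeWave aI di ei Di Ei x = 0)
      ∧ (∀ x : V, laplacian (planeWave aR dr er Di Ei) x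
          + ((η : ℂ) + Complex.I * (ξ : ℂ)) ^ 2 * planeWave aR dr er Di Ei x = 0)
      ∧ (∀ x : V, laplacian (planeWave aT dt et Dt Et) x
          + ((ηt : ℂ) + Complex.I * (ξt : ℂ)) ^ 2 * planeWave aT dt et Dt Et x = 0)
      ∧ (∀ x : V, (inner ℝ x n : ℝ) = 0 →
          planeWave aI di ei Di Ei x + planeWave aR dr er Di Ei x
              = planeWave aT dt et Dt Et x
            ∧ dirDeriv (planeWave aI di ei Di Ei) n x
                + dirDeriv (planeWave aR dr er Di Ei) n x
              = α * dirDeriv (planeWave aT dt et Dt Et) n x) :=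
  GO_construction_solves_interface_problem_general t n ht hn htn η ξ ηt ξt aI di ei hdi hei Di Ei
    hHelmI1 hHelmI2 Nt hNt Et' hEt' Dt hDt Et hEt dt et hdt het hSnellD hSnellE hHelmT dr hdr er her
    γi γt hγi hγt α hden aR haR aT haT
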